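/- Define ψ(n1, n2, r) := Σ_{u mod r, gcd(u,r)=1} R(u + n1, r) · R(u + n2, r). Then ψ is multiplicative in its third argument: for all integers n1, n2 and all coprime positive integers s and t, ψ(n1, n2, s·t) = ψ(n1, n2, s) · ψ(n1, n2, t). -/

import Mathlib

/-- `e(x/q)`-type additive character: for `x : ZMod q`, `eZMod q x = exp(2πi·x/q)`. -/
noncomputable def eZMod (q : ℕ) (x : ZMod q) : ℂ :=
  Complex.exp (2 * Real.pi * Complex.I * (x.val : ℂ) / (q : ℂ))

/-- Kloosterman sum `S(m, n; q) = Σ_{d mod q, gcd(d,q)=1} e((m·d + n·d⁻¹)/q)`. -/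
noncomputable def kloostermanS (q : ℕ) (m n : ZMod q) : ℂ :=
  ∑ d ∈ (Finset.range q).filter (fun d => Nat.gcd d q = 1),
    eZMod q (m * (d : ZMod q) + n * ((d : ZMod q)⁻¹))

/-- Gauss sum `G_χ(n) = Σ_{a mod q} χ(a) e(a·n/q)`. -/
noncomputable def gaussS (q : ℕ) (χ : DirichletCharacter ℂ q) (n : ZMod q) : ℂ :=
  ∑ a ∈ Finset.range q, χ (a : ZMod q) * eZMod q ((a : ZMod q) * n)

/-- Ramanujan sum `R(n, q) = Σ_{a mod q, gcd(a,q)=1} e(a·n/q)`. -/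
noncomputable def ramanujanS (q : ℕ) (n : ZMod q) : ℂ :=
  ∑ a ∈ (Finset.range q).filter (fun a => Nat.gcd a q = 1), eZMod q ((a : ZMod q) * n)

/-- `ψ(n1, n2, r) = Σ_{u mod r, (u,r)=1} R(u + n1, r) R(u + n2, r)`. -/
noncomputable def psiSum (n1 n2 : ℤ) (r : ℕ) : ℂ :=
  ∑ u ∈ (Finset.range r).filter (fun u => Nat.gcd u r = 1),
    ramanujanS r (((u : ℕ) : ZMod r) + (n1 : ZMod r)) *
      ramanujanS r (((u : ℕ) : ZMod r) + (n2 : ZMod r))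

/-!
By the Chinese remainder theorem a reduced residue modulo `s * t` is the same as a pair of
reduced residues modulo `s` and modulo `t`. Writing `1 = a * s + b * t` splits
`e(x / st) = e(b x / s) e(a x / t)`; as `b` and `a` are units modulo `s` and `t` they are
absorbed into the summation variable, so `R(n, st) = R(n, s) R(n, t)`. Substituting this into
`ψ(n₁, n₂, st)` and applying the Chinese remainder theorem once more to the outer sum
factors `ψ`.
-/

open Finset

theorem sum_coprime_eq_sum_units {M : Type*} [AddCommMonoid M] (q : ℕ) [NeZero q]
    (f : ZMod q → M) :
    ∑ a ∈ (range q).filter (fun a => Nat.gcd a q = 1), f a = ∑ u : (ZMod q)ˣ, f u := by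
  refine sum_bij' (fun a ha => ZMod.unitOfCoprime a (mem_filter.mp ha).2)
    (fun u _ => (u : ZMod q).val) (fun _ _ => mem_univ _) (fun u _ => ?_) (fun a ha => ?_)
    (fun u _ => Units.ext (ZMod.natCast_zmod_val _)) (fun _ _ => rfl)
  · simpa using ⟨ZMod.val_lt _, ZMod.val_coe_unit_coprime u⟩
  · exact ZMod.val_natCast_of_lt (mem_range.mp (mem_filter.mp ha).1)

theorem sum_units_mul_eq_sum_sum_units {M : Type*} [AddCommMonoid M] {s t : ℕ} [NeZero s]
    [NeZero t] (hst : s.Coprime t) (F : ZMod s → ZMod t → M) :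
    ∑ u : (ZMod (s * t))ˣ, F (u : ZMod (s * t)).cast (u : ZMod (s * t)).cast =
      ∑ a : (ZMod s)ˣ, ∑ b : (ZMod t)ˣ, F a b := by
  rw [← Fintype.sum_prod_type']
  exact Fintype.sum_equiv ((Units.mapEquiv (ZMod.chineseRemainder hst).toMulEquiv).trans
    MulEquiv.prodUnits).toEquiv _ _ fun u => by
      simp [ZMod.chineseRemainder, MulEquiv.prodUnits, Prod.fst_zmod_cast, Prod.snd_zmod_cast]

theorem eZMod_eq_stdAddChar (q : ℕ) [NeZero q] (x : ZMod q) : eZMod q x = ZMod.stdAddChar x := by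
  rw [ZMod.stdAddChar_apply, ZMod.toCircle_apply]
  rfl

theorem eZMod_mul_of_add_eq_one {s t : ℕ} [NeZero s] [NeZero t] {a b : ℤ}
    (hab : a * s + b * t = 1) (x : ZMod (s * t)) :
    eZMod (s * t) x = eZMod s (b * x.cast) * eZMod t (a * x.cast) := by
  obtain ⟨m, rfl⟩ := ZMod.intCast_surjective x
  rw [ZMod.cast_intCast (dvd_mul_right s t), ZMod.cast_intCast (dvd_mul_left t s),
    ← Int.cast_mul, ← Int.cast_mul]
  simp only [eZMod_eq_stdAddChar, ZMod.stdAddChar_coe, ← Complex.exp_add]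
  have hs : (s : ℂ) ≠ 0 := NeZero.ne _
  have ht : (t : ℂ) ≠ 0 := NeZero.ne _
  have hab' : (a : ℂ) * s + b * t = 1 := by exact_mod_cast hab
  congr 1
  push_cast
  field_simp
  linear_combination (-(m : ℂ)) * hab'

theorem ramanujanS_eq_sum_units (q : ℕ) [NeZero q] (n : ZMod q) :
    ramanujanS q n = ∑ u : (ZMod q)ˣ, eZMod q (u * n) :=
  sum_coprime_eq_sum_units q fun x => eZMod q (x * n)

theorem ramanujanS_mul_left_of_isUnit (q : ℕ) [NeZero q] {v : ZMod q} (hv : IsUnit v)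
    (n : ZMod q) :
    ramanujanS q (v * n) = ramanujanS q n := by
  obtain ⟨v, rfl⟩ := hv
  simp only [ramanujanS_eq_sum_units, ← mul_assoc]
  exact Fintype.sum_equiv (Equiv.mulRight v) _ _ fun u => rfl

theorem ramanujanS_mul {s t : ℕ} [NeZero s] [NeZero t] (hst : s.Coprime t) (n : ZMod (s * t)) :
    ramanujanS (s * t) n = ramanujanS s n.cast * ramanujanS t n.cast := by
  obtain ⟨a, b, hab⟩ := Nat.isCoprime_iff_coprime.mpr hst
  have hb : IsUnit (b : ZMod s) := IsUnit.of_mul_eq_one (t : ZMod s) <| by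
    simpa using congrArg (Int.cast : ℤ → ZMod s) hab
  have ha : IsUnit (a : ZMod t) := IsUnit.of_mul_eq_one (s : ZMod t) <| by
    simpa using congrArg (Int.cast : ℤ → ZMod t) hab
  rw [← ramanujanS_mul_left_of_isUnit s hb, ← ramanujanS_mul_left_of_isUnit t ha]
  simp only [ramanujanS_eq_sum_units, sum_mul_sum, eZMod_mul_of_add_eq_one hab,
    ZMod.cast_mul (dvd_mul_right s t), ZMod.cast_mul (dvd_mul_left t s)]
  rw [← sum_units_mul_eq_sum_sum_units hst fun x y =>
    eZMod s (x * (b * n.cast)) * eZMod t (y * (a * n.cast))]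
  simp only [mul_left_comm]

theorem psiSum_eq_sum_units (n1 n2 : ℤ) (q : ℕ) [NeZero q] :
    psiSum n1 n2 q = ∑ u : (ZMod q)ˣ, ramanujanS q (u + n1) * ramanujanS q (u + n2) :=
  sum_coprime_eq_sum_units q fun x => ramanujanS q (x + n1) * ramanujanS q (x + n2)

theorem stmt10_general (n1 n2 : ℤ) (s t : ℕ) (hst : Nat.Coprime s t) :
    psiSum n1 n2 (s * t) = psiSum n1 n2 s * psiSum n1 n2 t := by
  rcases eq_or_ne s 0 with rfl | hs
  · simp [psiSum]
  rcases eq_or_ne t 0 with rfl | ht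
  · simp [psiSum]
  have : NeZero s := ⟨hs⟩
  have : NeZero t := ⟨ht⟩
  simp only [psiSum_eq_sum_units, sum_mul_sum, ramanujanS_mul hst,
    ZMod.cast_add (dvd_mul_right s t), ZMod.cast_add (dvd_mul_left t s),
    ZMod.cast_intCast (dvd_mul_right s t), ZMod.cast_intCast (dvd_mul_left t s)]
  rw [← sum_units_mul_eq_sum_sum_units hst fun x y =>
    ramanujanS s (x + n1) * ramanujanS s (x + n2) * (ramanujanS t (y + n1) * ramanujanS t (y + n2))]
  exact Fintype.sum_congr _ _ fun u => mul_mul_mul_comm _ _ _ _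

/-- `ψ(n1, n2, ·)` is multiplicative: for coprime positive `s, t`,
`ψ(n1, n2, s·t) = ψ(n1, n2, s) · ψ(n1, n2, t)`. -/
theorem stmt10 (n1 n2 : ℤ) (s t : ℕ) (hs : 0 < s) (ht : 0 < t) (hst : Nat.Coprime s t) :
    psiSum n1 n2 (s * t) = psiSum n1 n2 s * psiSum n1 n2 t :=
  stmt10_general n1 n2 s t hst
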